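/- Let K = (O,D) be an ALCI-KB, Σ a signature, and Φ a set of K-types. If Φ is (O,Σ)-amalgamable as witnessed by models 𝔄_t (t ∈ Φ) realizing t at d_t with all (𝔄_t, d_t) pairwise ALCI(Σ)-bisimilar, then: (1) all types in Φ agree on the concept names in Σ, i.e., for all t,t' ∈ Φ and A ∈ Σ, A ∈ t iff A ∈ t'; and (2) for every t ∈ Φ, every Σ-role R, and every concept ∃R.C ∈ t, there exist types t'_s for each s ∈ Φ such that C ∈ t'_t, each pair (s, t'_s) is R-coherent (s ⇝_R t'_s), and the set {t'_s : s ∈ Φ} is again (O,Σ)-amalgamable. -/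
import Mathlib


/-- A role is a role name or an inverse role. -/
inductive DLRole (R : Type) : Type
  | pos : R → DLRole R
  | inv : R → DLRole R

/-- The underlying role name of a role. -/
def DLRole.name {R : Type} : DLRole R → R
  | DLRole.pos r => r
  | DLRole.inv r => r

/-- A structure interpreting concept names (unary) and role names (binary). -/
structure DLStruct (C R D : Type) where
  atom : C → D → Prop
  rel : R → D → D → Prop

/-- Interpretation of a role (role name or inverse). -/
def DLStruct.rinterp {C R D : Type} (A : DLStruct C R D) : DLRole R → D → D → Prop
  | DLRole.pos r => A.rel r
  | DLRole.inv r => fun d e => A.rel r e d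

/-- ALCI concepts. -/
inductive DLConcept (C R : Type) : Type
  | atom : C → DLConcept C R
  | neg : DLConcept C R → DLConcept C R
  | and : DLConcept C R → DLConcept C R → DLConcept C R
  | ex : DLRole R → DLConcept C R → DLConcept C R

/-- Extension of an ALCI concept in a structure. -/
def DLConcept.sem {C R D : Type} (A : DLStruct C R D) : DLConcept C R → D → Prop
  | DLConcept.atom a, d => A.atom a d
  | DLConcept.neg c, d => ¬ DLConcept.sem A c d
  | DLConcept.and c c', d => DLConcept.sem A c d ∧ DLConcept.sem A c' d
  | DLConcept.ex ρ c, d => ∃ e, A.rinterp ρ d e ∧ DLConcept.sem A c e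

/-- A concept uses only symbols from the signature (SC, SR). -/
def DLConcept.inSig {C R : Type} (SC : Set C) (SR : Set R) : DLConcept C R → Prop
  | DLConcept.atom a => a ∈ SC
  | DLConcept.neg c => DLConcept.inSig SC SR c
  | DLConcept.and c c' => DLConcept.inSig SC SR c ∧ DLConcept.inSig SC SR c'
  | DLConcept.ex ρ c => ρ.name ∈ SR ∧ DLConcept.inSig SC SR c

/-- ALCI(Σ)-bisimulation between structures A and B. -/
def IsBisim {C R D₁ D₂ : Type} (SC : Set C) (SR : Set R)
    (A : DLStruct C R D₁) (B : DLStruct C R D₂) (S : D₁ → D₂ → Prop) : Prop :=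
  (∀ d e, S d e → ∀ a ∈ SC, (A.atom a d ↔ B.atom a e)) ∧
  (∀ d e, S d e → ∀ ρ : DLRole R, ρ.name ∈ SR →
    ∀ d', A.rinterp ρ d d' → ∃ e', B.rinterp ρ e e' ∧ S d' e') ∧
  (∀ d e, S d e → ∀ ρ : DLRole R, ρ.name ∈ SR →
    ∀ e', B.rinterp ρ e e' → ∃ d', A.rinterp ρ d d' ∧ S d' e')

/-- ALCI(Σ)-bisimilarity of pointed structures. -/
def Bisimilar {C R D₁ D₂ : Type} (SC : Set C) (SR : Set R)
    (A : DLStruct C R D₁) (d : D₁) (B : DLStruct C R D₂) (e : D₂) : Prop :=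
  ∃ S, IsBisim SC SR A B S ∧ S d e

/-- An ALCI knowledge base: a finite ontology of concept inclusions and a
finite database of unary and binary ground atoms over constants. -/
structure DLKB (C R Const : Type) where
  onto : Set (DLConcept C R × DLConcept C R)
  dataC : Set (C × Const)
  dataR : Set (R × Const × Const)
  onto_fin : onto.Finite
  dataC_fin : dataC.Finite
  dataR_fin : dataR.Finite

/-- A model of a DLKB (no unique name assumption). -/
structure DLModel {C R Const : Type} (K : DLKB C R Const) (D : Type) where
  str : DLStruct C R D
  ι : Const → D
  onto_holds : ∀ p ∈ K.onto, ∀ d, DLConcept.sem str p.1 d → DLConcept.sem str p.2 d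
  dataC_holds : ∀ p ∈ K.dataC, str.atom p.1 (ι p.2)
  dataR_holds : ∀ p ∈ K.dataR, str.rel p.1 (ι p.2.1) (ι p.2.2)

/-- DLConcept names occurring in a concept. -/
def DLConcept.cnames {C R : Type} : DLConcept C R → Set C
  | DLConcept.atom a => {a}
  | DLConcept.neg c => DLConcept.cnames c
  | DLConcept.and c c' => DLConcept.cnames c ∪ DLConcept.cnames c'
  | DLConcept.ex _ c => DLConcept.cnames c

/-- DLRole names occurring in a concept. -/
def DLConcept.rnames {C R : Type} : DLConcept C R → Set R
  | DLConcept.atom _ => ∅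
  | DLConcept.neg c => DLConcept.rnames c
  | DLConcept.and c c' => DLConcept.rnames c ∪ DLConcept.rnames c'
  | DLConcept.ex ρ c => insert ρ.name (DLConcept.rnames c)

/-- DLConcept names occurring in a DLKB. -/
def DLKB.sigC {C R Const : Type} (K : DLKB C R Const) : Set C :=
  {a | (∃ p ∈ K.onto, a ∈ p.1.cnames ∪ p.2.cnames) ∨ ∃ c, (a, c) ∈ K.dataC}

/-- DLRole names occurring in a DLKB. -/
def DLKB.sigR {C R Const : Type} (K : DLKB C R Const) : Set R :=
  {r | (∃ p ∈ K.onto, r ∈ p.1.rnames ∪ p.2.rnames) ∨ ∃ c c', (r, c, c') ∈ K.dataR}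

/-- Subconcepts of a concept. -/
def DLConcept.subs {C R : Type} : DLConcept C R → Set (DLConcept C R)
  | DLConcept.atom a => {DLConcept.atom a}
  | DLConcept.neg c => insert (DLConcept.neg c) (DLConcept.subs c)
  | DLConcept.and c c' => insert (DLConcept.and c c') (DLConcept.subs c ∪ DLConcept.subs c')
  | DLConcept.ex ρ c => insert (DLConcept.ex ρ c) (DLConcept.subs c)

/-- sub(K): concepts occurring in K, closed under subconcepts and single
negation. -/
def DLKB.sub {C R Const : Type} (K : DLKB C R Const) : Set (DLConcept C R) :=
  {c | ∃ p ∈ K.onto, c ∈ p.1.subs ∪ p.2.subs} ∪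
    DLConcept.neg '' {c | ∃ p ∈ K.onto, c ∈ p.1.subs ∪ p.2.subs}

/-- The K-type realized at a pointed structure. -/
def DLKB.tp {C R Const D : Type} (K : DLKB C R Const) (A : DLStruct C R D) (d : D) :
    Set (DLConcept C R) :=
  {c | c ∈ K.sub ∧ DLConcept.sem A c d}

/-- A K-type is any set realized at some pointed structure. -/
def DLKB.IsType {C R Const : Type} (K : DLKB C R Const) (t : Set (DLConcept C R)) : Prop :=
  ∃ (D : Type) (A : DLStruct C R D) (d : D), t = K.tp A d

/-- A structure satisfies the ontology of K. -/
def DLKB.SatOnto {C R Const D : Type} (K : DLKB C R Const) (A : DLStruct C R D) : Prop :=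
  ∀ p ∈ K.onto, ∀ d, DLConcept.sem A p.1 d → DLConcept.sem A p.2 d

/-- R-coherence of K-types: t₁ ⇝_R t₂. -/
def DLKB.Coherent {C R Const : Type} (K : DLKB C R Const) (ρ : DLRole R)
    (t₁ t₂ : Set (DLConcept C R)) : Prop :=
  ∃ (D : Type) (A : DLStruct C R D) (d₁ d₂ : D),
    K.SatOnto A ∧ K.tp A d₁ = t₁ ∧ K.tp A d₂ = t₂ ∧ A.rinterp ρ d₁ d₂

/-- Φ is (O,Σ)-amalgamable: there are models of the ontology realizing the
types of Φ at points that are pairwise ALCI(Σ)-bisimilar. -/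
def DLKB.Amalg {C R Const : Type} (K : DLKB C R Const) (SC : Set C) (SR : Set R)
    (Φ : Set (Set (DLConcept C R))) : Prop :=
  ∃ (D : Φ → Type) (A : (t : Φ) → DLStruct C R (D t)) (d : (t : Φ) → D t),
    (∀ t, K.SatOnto (A t)) ∧
    (∀ t : Φ, K.tp (A t) (d t) = (t : Set (DLConcept C R))) ∧
    (∀ t t', Bisimilar SC SR (A t) (d t) (A t') (d t'))

lemma bisim_refl' {C R D : Type} (SC : Set C) (SR : Set R) (A : DLStruct C R D) (d : D) :
    Bisimilar SC SR A d A d :=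
  ⟨Eq, ⟨fun x y h a _ => by rw [h],
    fun x y h ρ _ x' hx' => ⟨x', by rw [← h]; exact hx', rfl⟩,
    fun x y h ρ _ y' hy' => ⟨y', by rw [h]; exact hy', rfl⟩⟩, rfl⟩

lemma bisim_symm' {C R D₁ D₂ : Type} {SC : Set C} {SR : Set R}
    {A : DLStruct C R D₁} {B : DLStruct C R D₂} {d : D₁} {e : D₂} :
    Bisimilar SC SR A d B e → Bisimilar SC SR B e A d := by
  rintro ⟨S, ⟨h1, h2, h3⟩, hS⟩
  exact ⟨fun x y => S y x, ⟨fun x y h a ha => (h1 y x h a ha).symm,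
    fun x y h ρ hρ x' hx' => h3 y x h ρ hρ x' hx',
    fun x y h ρ hρ y' hy' => h2 y x h ρ hρ y' hy'⟩, hS⟩

lemma bisim_trans' {C R D₁ D₂ D₃ : Type} {SC : Set C} {SR : Set R}
    {A : DLStruct C R D₁} {B : DLStruct C R D₂} {Cs : DLStruct C R D₃}
    {d : D₁} {e : D₂} {f : D₃} :
    Bisimilar SC SR A d B e → Bisimilar SC SR B e Cs f → Bisimilar SC SR A d Cs f := by
  rintro ⟨S, ⟨h1, h2, h3⟩, hS⟩ ⟨T, ⟨g1, g2, g3⟩, hT⟩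
  refine ⟨fun x z => ∃ y, S x y ∧ T y z, ⟨?_, ?_, ?_⟩, ⟨e, hS, hT⟩⟩
  · rintro x z ⟨y, hxy, hyz⟩ a ha
    exact (h1 x y hxy a ha).trans (g1 y z hyz a ha)
  · rintro x z ⟨y, hxy, hyz⟩ ρ hρ x' hx'
    obtain ⟨y', hy', hS'⟩ := h2 x y hxy ρ hρ x' hx'
    obtain ⟨z', hz', hT'⟩ := g2 y z hyz ρ hρ y' hy'
    exact ⟨z', hz', y', hS', hT'⟩
  · rintro x z ⟨y, hxy, hyz⟩ ρ hρ z' hz'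
    obtain ⟨y', hy', hT'⟩ := g3 y z hyz ρ hρ z' hz'
    obtain ⟨x', hx', hS'⟩ := h3 x y hxy ρ hρ y' hy'
    exact ⟨x', hx', y', hS', hT'⟩

lemma mem_subs_self {C R : Type} (c : DLConcept C R) : c ∈ c.subs := by
  cases c <;> simp [DLConcept.subs]

lemma subs_ex_closed {C R : Type} {ρ : DLRole R} {Cc : DLConcept C R} :
    ∀ X : DLConcept C R, DLConcept.ex ρ Cc ∈ X.subs → Cc ∈ X.subs := by
  intro X
  induction X with
  | atom a => intro h; simp [DLConcept.subs] at h
  | neg c ih =>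
    intro h
    rcases h with h | h
    · cases h
    · exact Set.mem_insert_of_mem _ (ih h)
  | and c c' ih ih' =>
    intro h
    rcases h with h | h
    · cases h
    rcases h with h | h
    · exact Set.mem_insert_of_mem _ (Set.mem_union_left _ (ih h))
    · exact Set.mem_insert_of_mem _ (Set.mem_union_right _ (ih' h))
  | ex ρ' c ih =>
    intro h
    rcases h with h | h
    · cases h
      exact Set.mem_insert_of_mem _ (mem_subs_self Cc)
    · exact Set.mem_insert_of_mem _ (ih h)

lemma sub_ex_closed {C R Const : Type} {K : DLKB C R Const} {ρ : DLRole R}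
    {Cc : DLConcept C R} (h : DLConcept.ex ρ Cc ∈ K.sub) : Cc ∈ K.sub := by
  rcases h with h | ⟨c, _, hc⟩
  · obtain ⟨p, hp, hin⟩ := h
    left
    refine ⟨p, hp, ?_⟩
    rcases hin with h | h
    · exact Set.mem_union_left _ (subs_ex_closed _ h)
    · exact Set.mem_union_right _ (subs_ex_closed _ h)
  · cases hc


/-- if a set Φ of K-types is (O,Σ)-amalgamable then (1) all
types in Φ agree on the Σ-concept names, and (2) for every t ∈ Φ, Σ-role R and
∃R.C ∈ t there are types t'_s (s ∈ Φ) with C ∈ t'_t, s ⇝_R t'_s for each s,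
and {t'_s : s ∈ Φ} again (O,Σ)-amalgamable. -/
theorem amalgamable_closure {C R Const : Type} (K : DLKB C R Const)
    (SC : Set C) (SR : Set R) (Φ : Set (Set (DLConcept C R)))
    (htypes : ∀ t ∈ Φ, K.IsType t) (hamalg : K.Amalg SC SR Φ) :
    (∀ t ∈ Φ, ∀ t' ∈ Φ, ∀ A ∈ SC,
      (DLConcept.atom A ∈ t ↔ DLConcept.atom A ∈ t')) ∧
    (∀ t, (ht : t ∈ Φ) → ∀ ρ : DLRole R, ρ.name ∈ SR →
      ∀ Cc : DLConcept C R, DLConcept.ex ρ Cc ∈ t →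
      ∃ f : Φ → Set (DLConcept C R),
        (∀ s, K.IsType (f s)) ∧
        Cc ∈ f ⟨t, ht⟩ ∧
        (∀ s : Φ, K.Coherent ρ (s : Set (DLConcept C R)) (f s)) ∧
        K.Amalg SC SR (Set.range f)) := by
  classical
  obtain ⟨D, A, d, hsat, htp, hbis⟩ := hamalg
  constructor
  · intro t ht t' ht' a ha
    obtain ⟨S, ⟨h1, _, _⟩, hS⟩ := hbis ⟨t, ht⟩ ⟨t', ht'⟩
    have key : ∀ (x : Set (DLConcept C R)) (hx : x ∈ Φ),
        DLConcept.atom a ∈ x ↔ DLConcept.atom a ∈ K.tp (A ⟨x, hx⟩) (d ⟨x, hx⟩) := by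
      intro x hx
      rw [htp ⟨x, hx⟩]
    rw [key t ht, key t' ht']
    constructor
    · rintro ⟨hsub, hsem⟩
      exact ⟨hsub, (h1 _ _ hS a ha).mp hsem⟩
    · rintro ⟨hsub, hsem⟩
      exact ⟨hsub, (h1 _ _ hS a ha).mpr hsem⟩
  · intro t ht ρ hρ Cc hex
    set tt : Φ := ⟨t, ht⟩ with htt
    have hex' : DLConcept.ex ρ Cc ∈ K.tp (A tt) (d tt) := by
      rw [htp]; exact hex
    obtain ⟨hsub, e0, he0, hCe0⟩ := hex'
    have hch : ∀ s : Φ, ∃ es : D s,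
        (A s).rinterp ρ (d s) es ∧ Bisimilar SC SR (A tt) e0 (A s) es := by
      intro s
      obtain ⟨S, hSb, hS⟩ := hbis tt s
      obtain ⟨es, hes, hSes⟩ := hSb.2.1 _ _ hS ρ hρ e0 he0
      exact ⟨es, hes, S, hSb, hSes⟩
    choose E hE1 hE2 using hch
    let Ef : (s : Φ) → D s := fun s =>
      if h : s = tt then cast (congrArg D h.symm) e0 else E s
    have hEftt : Ef tt = e0 := by simp [Ef]
    have hEf1 : ∀ s : Φ, (A s).rinterp ρ (d s) (Ef s) := by
      intro s
      by_cases h : s = tt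
      · subst h
        rw [hEftt]; exact he0
      · show (A s).rinterp ρ (d s) (dite _ _ _)
        rw [dif_neg h]; exact hE1 s
    have hEf2 : ∀ s : Φ, Bisimilar SC SR (A tt) e0 (A s) (Ef s) := by
      intro s
      by_cases h : s = tt
      · subst h
        rw [hEftt]; exact bisim_refl' SC SR (A tt) e0
      · show Bisimilar SC SR (A tt) e0 (A s) (dite _ _ _)
        rw [dif_neg h]; exact hE2 s
    refine ⟨fun s => K.tp (A s) (Ef s), ?_, ?_, ?_, ?_⟩
    · intro s; exact ⟨D s, A s, Ef s, rfl⟩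
    · show Cc ∈ K.tp (A tt) (Ef tt)
      rw [hEftt]
      exact ⟨sub_ex_closed hsub, hCe0⟩
    · intro s
      exact ⟨D s, A s, d s, Ef s, hsat s, htp s, rfl, hEf1 s⟩
    · refine ⟨fun u => D u.2.choose, fun u => A u.2.choose, fun u => Ef u.2.choose,
        fun u => hsat _, ?_, ?_⟩
      · intro u
        exact u.2.choose_spec
      · intro u u'
        exact bisim_trans' (bisim_symm' (hEf2 u.2.choose)) (hEf2 u'.2.choose)
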